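/- For every s ∈ (0,1], the distance in the Siegel domain model of the quaternionic hyperbolic n-space between the horospheres ∂H_1 and ∂H_s (boundaries of the horoballs H_t = {(w_0,w) : tr w_0 - n(w) ≥ t}) equals -(ln s)/2. -/

import Mathlib

noncomputable section

open Quaternion

variable (n : ℕ)

/-- The height `tr w₀ - n(w)` of a point of `ℍ × ℍ^{n-1}`. -/
def siegelHeight (p : Quaternion ℝ × (Fin (n - 1) → Quaternion ℝ)) : ℝ :=
  2 * p.1.re - ∑ i, normSq (p.2 i)

/-- The Siegel domain `{(w₀,w) ∈ ℍ × ℍ^{n-1} : tr w₀ - n(w) > 0}`. -/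
def SiegelDomain : Set (Quaternion ℝ × (Fin (n - 1) → Quaternion ℝ)) :=
  {p | 0 < siegelHeight n p}

/-- The horosphere `∂H_s = {(w₀,w) : tr w₀ - n(w) = s}`, the boundary of the horoball
`H_s = {(w₀,w) : tr w₀ - n(w) ≥ s}` centred at `∞`. -/
def horoSphere (s : ℝ) : Set (Quaternion ℝ × (Fin (n - 1) → Quaternion ℝ)) :=
  {p | siegelHeight n p = s}

/-- The speed at time `t` of a path `γ` with derivative `γ'`, for the Riemannian metric
`ds² = (tr w₀ - n(w))⁻² ( n(dw₀ - conj(dw)·w) + (tr w₀ - n(w)) n(dw) )`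
of the Siegel domain model of the quaternionic hyperbolic `n`-space. -/
def siegelSpeed (γ γ' : ℝ → Quaternion ℝ × (Fin (n - 1) → Quaternion ℝ)) (t : ℝ) : ℝ :=
  (1 / siegelHeight n (γ t)) *
    Real.sqrt (normSq ((γ' t).1 - ∑ i, star ((γ' t).2 i) * (γ t).2 i)
      + siegelHeight n (γ t) * ∑ i, normSq ((γ' t).2 i))

/-- The Riemannian length of a `C¹` path in the Siegel domain. -/
def siegelLength (γ γ' : ℝ → Quaternion ℝ × (Fin (n - 1) → Quaternion ℝ)) : ℝ :=
  ∫ t in (0 : ℝ)..1, siegelSpeed n γ γ' t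

/-!
Write `h = tr w₀ - n(w)` for the height and `A = dw₀ - conj(dw)·w`. Along any path
`dh = 2 Re A`, while the metric gives `ds ≥ √(n A) / h ≥ -Re A / h = -d(log h)/2`; integrating,
every path from `∂H₁` to `∂H_s` has length at least `-(log s)/2`. The vertical path
`t ↦ (s^t / 2, 0)` has constant speed `-(log s)/2` and attains the bound.
-/

namespace Quaternion

theorem re_mul_comm (a b : ℍ[ℝ]) : (a * b).re = (b * a).re := by
  simp only [re_mul]
  ring

theorem re_sum {ι : Type*} (s : Finset ι) (f : ι → ℍ[ℝ]) :
    (∑ i ∈ s, f i).re = ∑ i ∈ s, (f i).re :=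
  map_sum (QuaternionAlgebra.reₗ _ _ _) f s

theorem sq_re_le_normSq (a : ℍ[ℝ]) : a.re ^ 2 ≤ normSq a := by
  rw [normSq_def']
  nlinarith [sq_nonneg a.imI, sq_nonneg a.imJ, sq_nonneg a.imK]

end Quaternion

/-- The quaternion `dw₀ - conj(dw)·w` at the point `p = (w₀, w)` in the direction `v = dp`. -/
def siegelOneForm (p v : Quaternion ℝ × (Fin (n - 1) → Quaternion ℝ)) : Quaternion ℝ :=
  v.1 - ∑ i, star (v.2 i) * p.2 i

theorem continuous_siegelHeight : Continuous (siegelHeight n) := by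
  unfold siegelHeight
  have := Quaternion.continuous_re
  have := Quaternion.continuous_normSq
  fun_prop

theorem continuous_siegelOneForm :
    Continuous fun pv : (Quaternion ℝ × (Fin (n - 1) → Quaternion ℝ)) ×
      (Quaternion ℝ × (Fin (n - 1) → Quaternion ℝ)) => siegelOneForm n pv.1 pv.2 := by
  unfold siegelOneForm
  fun_prop

theorem HasDerivAt.siegelHeight_comp {γ : ℝ → Quaternion ℝ × (Fin (n - 1) → Quaternion ℝ)}
    {v : Quaternion ℝ × (Fin (n - 1) → Quaternion ℝ)} {t : ℝ} (hγ : HasDerivAt γ v t) :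
    HasDerivAt (fun u => siegelHeight n (γ u)) (2 * (siegelOneForm n (γ t) v).re) t := by
  have hre : HasDerivAt (fun u => (γ u).1.re) v.1.re t := by
    simpa [inner_def] using
      hγ.hasFDerivAt.fst.hasDerivAt.inner ℝ (hasDerivAt_const t (1 : ℍ[ℝ]))
  have hnormSq (i : Fin (n - 1)) :
      HasDerivAt (fun u => normSq ((γ u).2 i)) (2 * (star (v.2 i) * (γ t).2 i).re) t := by
    have hi : HasDerivAt (fun u => (γ u).2 i) (v.2 i) t := by
      simpa using (hasDerivAt_pi.1 (hγ.hasFDerivAt.snd.hasDerivAt)) i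
    convert hi.norm_sq using 1
    · simp only [normSq_eq_norm_mul_self, sq]
    · rw [inner_def, re_mul_comm]
  refine ((hre.const_mul 2).fun_sub (HasDerivAt.fun_sum (u := Finset.univ)
    fun i _ => hnormSq i)).congr_deriv ?_
  rw [siegelOneForm, re_sub, re_sum, mul_sub, Finset.mul_sum]

theorem neg_re_siegelOneForm_div_le_siegelSpeed
    {γ γ' : ℝ → Quaternion ℝ × (Fin (n - 1) → Quaternion ℝ)} {t : ℝ} (ht : γ t ∈ SiegelDomain n) :
    -(siegelOneForm n (γ t) (γ' t)).re / siegelHeight n (γ t) ≤ siegelSpeed n γ γ' t := by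
  set A := siegelOneForm n (γ t) (γ' t)
  have hA : -A.re ≤ √(normSq A + siegelHeight n (γ t) * ∑ i, normSq ((γ' t).2 i)) := calc
    -A.re ≤ |A.re| := neg_le_abs _
    _ ≤ √(normSq A) := Real.abs_le_sqrt (sq_re_le_normSq A)
    _ ≤ _ := Real.sqrt_le_sqrt <| le_add_of_nonneg_right <|
      mul_nonneg ht.le (Finset.sum_nonneg fun i _ => normSq_nonneg)
  rw [div_eq_inv_mul, ← one_div]
  exact mul_le_mul_of_nonneg_left hA (one_div_nonneg.2 ht.le)

theorem continuousOn_siegelSpeed {γ γ' : ℝ → Quaternion ℝ × (Fin (n - 1) → Quaternion ℝ)}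
    {S : Set ℝ} (hγ : ContinuousOn γ S) (hγ' : ContinuousOn γ' S)
    (hS : ∀ t ∈ S, γ t ∈ SiegelDomain n) : ContinuousOn (siegelSpeed n γ γ') S := by
  have hh : ContinuousOn (fun t => siegelHeight n (γ t)) S :=
    (continuous_siegelHeight n).comp_continuousOn hγ
  have hA : ContinuousOn (fun t => siegelOneForm n (γ t) (γ' t)) S :=
    (continuous_siegelOneForm n).comp_continuousOn (hγ.prodMk hγ')
  have hv : ContinuousOn (fun t => ∑ i, normSq ((γ' t).2 i)) S :=
    continuousOn_finsetSum _ fun i _ => continuous_normSq.comp_continuousOn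
      ((continuous_apply i).comp_continuousOn (continuous_snd.comp_continuousOn hγ'))
  have h1 : ContinuousOn (fun t => 1 / siegelHeight n (γ t)) S :=
    continuousOn_const.div hh fun t ht => (hS t ht).ne'
  have h2 : ContinuousOn (fun t => √(normSq (siegelOneForm n (γ t) (γ' t)) +
      siegelHeight n (γ t) * ∑ i, normSq ((γ' t).2 i))) S :=
    Real.continuous_sqrt.comp_continuousOn ((continuous_normSq.comp_continuousOn hA).add
      (hh.mul hv))
  exact h1.mul h2

theorem log_siegelHeight_sub_le_siegelLength
    {γ γ' : ℝ → Quaternion ℝ × (Fin (n - 1) → Quaternion ℝ)}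
    (hγ : ∀ t ∈ Set.Icc (0 : ℝ) 1, HasDerivAt γ (γ' t) t)
    (hγ' : ContinuousOn γ' (Set.Icc (0 : ℝ) 1))
    (hS : ∀ t ∈ Set.Icc (0 : ℝ) 1, γ t ∈ SiegelDomain n) :
    (Real.log (siegelHeight n (γ 0)) - Real.log (siegelHeight n (γ 1))) / 2 ≤
      siegelLength n γ γ' := by
  have hlog (t : ℝ) (ht : t ∈ Set.Icc (0 : ℝ) 1) :
      HasDerivAt (fun u => -Real.log (siegelHeight n (γ u)) / 2)
        (-(siegelOneForm n (γ t) (γ' t)).re / siegelHeight n (γ t)) t := by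
    refine ((((hγ t ht).siegelHeight_comp n).log (hS t ht).ne').neg.div_const 2).congr_deriv ?_
    ring
  have hγc : ContinuousOn γ (Set.Icc 0 1) := fun t ht =>
    (hγ t ht).continuousAt.continuousWithinAt
  have := intervalIntegral.sub_le_integral_of_hasDeriv_right_of_le zero_le_one
    (fun t ht => (hlog t ht).continuousAt.continuousWithinAt)
    (fun t ht => (hlog t (Set.Ioo_subset_Icc_self ht)).hasDerivWithinAt)
    (continuousOn_siegelSpeed n hγc hγ' hS).integrableOn_Icc
    (fun t ht => neg_re_siegelOneForm_div_le_siegelSpeed n (hS t (Set.Ioo_subset_Icc_self ht)))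
  convert this using 1
  · ring
  · rfl

def verticalPath (c t : ℝ) : Quaternion ℝ × (Fin (n - 1) → Quaternion ℝ) :=
  (((Real.exp (c * t) / 2 : ℝ) : Quaternion ℝ), 0)

def verticalPathDeriv (c t : ℝ) : Quaternion ℝ × (Fin (n - 1) → Quaternion ℝ) :=
  (((c * Real.exp (c * t) / 2 : ℝ) : Quaternion ℝ), 0)

theorem hasDerivAt_verticalPath (c t : ℝ) :
    HasDerivAt (verticalPath n c) (verticalPathDeriv n c t) t := by
  have hexp : HasDerivAt (fun u => Real.exp (c * u) / 2) (c * Real.exp (c * t) / 2) t := by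
    simpa [mul_comm c] using (((hasDerivAt_id t).const_mul c).exp.div_const 2)
  have hcoe := hexp.smul_const (1 : Quaternion ℝ)
  simp only [← Quaternion.coe_one, Quaternion.smul_coe, mul_one] at hcoe
  exact hcoe.prodMk (hasDerivAt_const t 0)

theorem continuous_verticalPathDeriv (c : ℝ) : Continuous (verticalPathDeriv n c) := by
  unfold verticalPathDeriv
  have := Quaternion.continuous_coe
  fun_prop

theorem siegelHeight_verticalPath (c t : ℝ) :
    siegelHeight n (verticalPath n c t) = Real.exp (c * t) := by
  simp only [siegelHeight, verticalPath, Quaternion.re_coe, Pi.zero_apply, map_zero,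
    Finset.sum_const_zero, sub_zero]
  ring

theorem siegelLength_verticalPath (c : ℝ) :
    siegelLength n (verticalPath n c) (verticalPathDeriv n c) = |c| / 2 := by
  have hspeed (t : ℝ) : siegelSpeed n (verticalPath n c) (verticalPathDeriv n c) t = |c| / 2 := by
    rw [siegelSpeed, siegelHeight_verticalPath]
    simp only [verticalPath, verticalPathDeriv, Pi.zero_apply, star_zero,
      Finset.sum_const_zero, sub_zero, map_zero, mul_zero, add_zero, Quaternion.normSq_coe,
      Real.sqrt_sq_eq_abs, abs_div, abs_mul, abs_of_pos (Real.exp_pos _), abs_two]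
    field_simp
  simp [siegelLength, hspeed]

theorem dist_between_horospheres (s : ℝ) (hs0 : 0 < s) (hs1 : s ≤ 1) :
    sInf {L : ℝ | ∃ γ γ' : ℝ → Quaternion ℝ × (Fin (n - 1) → Quaternion ℝ),
        (∀ t ∈ Set.Icc (0 : ℝ) 1, HasDerivAt γ (γ' t) t) ∧
        ContinuousOn γ' (Set.Icc (0 : ℝ) 1) ∧
        (∀ t ∈ Set.Icc (0 : ℝ) 1, γ t ∈ SiegelDomain n) ∧
        γ 0 ∈ horoSphere n 1 ∧ γ 1 ∈ horoSphere n s ∧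
        L = siegelLength n γ γ'}
      = -(Real.log s) / 2 := by
  refine IsLeast.csInf_eq ⟨?_, ?_⟩
  · refine ⟨verticalPath n (Real.log s), verticalPathDeriv n (Real.log s),
      fun t _ => hasDerivAt_verticalPath n _ t, (continuous_verticalPathDeriv n _).continuousOn,
      fun t _ => ?_, ?_, ?_, ?_⟩
    · exact (Real.exp_pos _).trans_eq (siegelHeight_verticalPath n _ t).symm
    · exact (siegelHeight_verticalPath n _ 0).trans (by simp)
    · exact (siegelHeight_verticalPath n _ 1).trans (by rw [mul_one, Real.exp_log hs0])
    · rw [siegelLength_verticalPath, abs_of_nonpos (Real.log_nonpos hs0.le hs1)]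
  · rintro L ⟨γ, γ', hγ, hγ', hS, h0, h1, rfl⟩
    simpa [h0.out, h1.out] using log_siegelHeight_sub_le_siegelLength n hγ hγ' hS
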